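/- arXiv:1510.05704 — 2 statements merged into one kernel-verified Lean document; each statement's English description precedes it below -/
import Mathlib

section
/- Let f : ℝ^{n+1} → ℝ satisfy the heat equation (or adjoint heat equation) in an open set 𝒪 ⊂ ℝ^n × ℝ and be identically zero outside 𝒪, with ∇f bounded on 𝒪. Then f is Hölder continuous of exponent 1/2 in the time variable: there is a dimensional constant c such that for all X ∈ ℝ^n and s, t ∈ ℝ, |f(X,t) − f(X,s)| ≤ c ‖∇f‖_{L^∞(𝒪)} |t − s|^{1/2}. -/
open MeasureTheory Real Set Filter Topology
open scoped ENNReal NNReal RealInnerProductSpace BigOperators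

noncomputable section

abbrev Pt (n : ℕ) := EuclideanSpace ℝ (Fin n) × ℝ

/-- Parabolic distance between points of `ℝ^n × ℝ`. -/
def pdist {n : ℕ} (p q : Pt n) : ℝ := dist p.1 q.1 + Real.sqrt |p.2 - q.2|

/-- Second pure spatial derivative in direction `i`. -/
def sdd {n : ℕ} (u : Pt n → ℝ) (i : Fin n) (p : Pt n) : ℝ :=
  fderiv ℝ (fun q => fderiv ℝ u q (EuclideanSpace.single i 1, (0 : ℝ))) p
    (EuclideanSpace.single i 1, (0 : ℝ))

/-- Time derivative. -/
def td {n : ℕ} (u : Pt n → ℝ) (p : Pt n) : ℝ := fderiv ℝ u p (0, (1 : ℝ))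

/-- `u` solves the adjoint heat equation `Δu + ∂ₜ u = 0` on `s`. -/
def IsAdjCaloricOn {n : ℕ} (u : Pt n → ℝ) (s : Set (Pt n)) : Prop :=
  ContDiffOn ℝ 2 u s ∧ ∀ p ∈ s, (∑ i : Fin n, sdd u i p) + td u p = 0

/-- `u` solves the heat equation `Δu - ∂ₜ u = 0` on `s`. -/
def IsCaloricOn {n : ℕ} (u : Pt n → ℝ) (s : Set (Pt n)) : Prop :=
  ContDiffOn ℝ 2 u s ∧ ∀ p ∈ s, (∑ i : Fin n, sdd u i p) - td u p = 0

/-!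
Along a spatial segment, `f` is `L`-Lipschitz on every piece lying in `O` and vanishes at the
points outside `O`; gluing the first and last of those points shows that `f` is `L`-Lipschitz in
space everywhere, across `∂O` too.

For the time variable fix the cube `Q` of side `2r` centred at `X`. As long as `Q × [u, v] ⊆ O`,
integrating the equation over `Q × [u, v]` and applying the divergence theorem in space bounds the
change of `∫_Q f(·, τ)` by the flux of `∇f` through `∂Q`, at most `2nL(2r)^(n-1) (v - u)`, while
`f(X, τ)` differs from the average of `f(·, τ)` over `Q` by at most `√n L r`. At a time `τ` when
`Q × {τ}` leaves `O`, `f(·, τ)` vanishes somewhere in `Q`, so `|f(X, τ)| ≤ √n L r`. Gluing again at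
the first and last such times gives `|f(X, t) - f(X, s)| ≤ nL|t - s|/r + 6√n L r`, and the
parabolic choice `r = √|t - s|` proves the theorem.
-/

open Function
open WithLp (toLp)

lemma abs_sub_le_of_Ioo_subset {h : ℝ → ℝ} {V : Set ℝ} {M D : ℝ} (hc : Continuous h)
    (hD : 0 ≤ D) (hV : ∀ u v, u ≤ v → Icc u v ⊆ V → |h v - h u| ≤ M * (v - u) + D)
    {x y : ℝ} (hxy : x ≤ y) (hI : Ioo x y ⊆ V) : |h y - h x| ≤ M * (y - x) + D := by
  rcases hxy.eq_or_lt with rfl | hlt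
  · simpa using hD
  set S := {p : ℝ × ℝ | |h p.2 - h p.1| ≤ M * |p.2 - p.1| + D}
  have hS : IsClosed S := isClosed_le (by fun_prop) (by fun_prop)
  have hsub : Ioo x y ×ˢ Ioo x y ⊆ S := by
    rintro ⟨p, q⟩ ⟨hp, hq⟩
    rcases le_total p q with hpq | hqp
    · simpa [S, abs_of_nonneg (sub_nonneg.2 hpq)] using
        hV p q hpq ((Icc_subset_Ioo hp.1 hq.2).trans hI)
    · simpa [S, abs_sub_comm (h q), abs_sub_comm q, abs_of_nonneg (sub_nonneg.2 hqp)] using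
        hV q p hqp ((Icc_subset_Ioo hq.1 hp.2).trans hI)
  have hmem : (x, y) ∈ closure (Ioo x y ×ˢ Ioo x y) := by
    rw [closure_prod_eq, closure_Ioo hlt.ne]
    exact ⟨⟨le_rfl, hlt.le⟩, ⟨hlt.le, le_rfl⟩⟩
  simpa [S, abs_of_nonneg (sub_nonneg.2 hxy)] using hS.closure_subset_iff.2 hsub hmem

lemma abs_sub_le_of_abs_le_off {h : ℝ → ℝ} {V : Set ℝ} {M C D : ℝ} (hc : Continuous h)
    (hM : 0 ≤ M) (hC : 0 ≤ C) (hD : 0 ≤ D) (hoff : ∀ x ∉ V, |h x| ≤ C)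
    (hV : ∀ u v, u ≤ v → Icc u v ⊆ V → |h v - h u| ≤ M * (v - u) + D) (x y : ℝ) :
    |h y - h x| ≤ M * |y - x| + 2 * (C + D) := by
  wlog hxy : x ≤ y generalizing x y
  · rw [abs_sub_comm (h y), abs_sub_comm y]
    exact this y x (le_of_not_ge hxy)
  rw [abs_of_nonneg (sub_nonneg.2 hxy)]
  by_cases hsub : Icc x y ⊆ V
  · linarith [hV x y hxy hsub]
  set Z := Icc x y \ V
  have hZ : Z.Nonempty := not_subset.1 hsub
  have hZb : BddBelow Z := bddBelow_Icc.mono sdiff_subset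
  have hZa : BddAbove Z := bddAbove_Icc.mono sdiff_subset
  have hZcl : closure Z ⊆ Icc x y ∩ {z | |h z| ≤ C} :=
    closure_minimal (fun z hz => ⟨hz.1, hoff z hz.2⟩)
      (isClosed_Icc.inter (isClosed_le (by fun_prop) continuous_const))
  obtain ⟨⟨hxa, -⟩, ha : |h (sInf Z)| ≤ C⟩ := hZcl (csInf_mem_closure hZ hZb)
  obtain ⟨⟨-, hby⟩, hb : |h (sSup Z)| ≤ C⟩ := hZcl (csSup_mem_closure hZ hZa)
  have hab : sInf Z ≤ sSup Z := csInf_le_csSup hZ hZb hZa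
  have hleft := abs_sub_le_of_Ioo_subset hc hD hV hxa fun z hz => by
    by_contra hzV
    exact (csInf_le hZb ⟨⟨hz.1.le, hz.2.le.trans (hab.trans hby)⟩, hzV⟩).not_gt hz.2
  have hright := abs_sub_le_of_Ioo_subset hc hD hV hby fun z hz => by
    by_contra hzV
    exact (le_csSup hZa ⟨⟨hxa.trans (hab.trans hz.1.le), hz.2.le⟩, hzV⟩).not_gt hz.1
  calc |h y - h x|
      ≤ |h y - h (sSup Z)| + (|h (sSup Z)| + |h (sInf Z)|) + |h (sInf Z) - h x| := by
        have := abs_sub_le (h y) (h (sSup Z)) (h x)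
        have := abs_sub_le (h (sSup Z)) (h (sInf Z)) (h x)
        have := abs_sub (h (sSup Z)) (h (sInf Z))
        linarith
    _ ≤ M * (y - x) + 2 * (C + D) := by nlinarith [mul_nonneg hM (sub_nonneg.2 hab)]

lemma abs_sub_le_of_abs_fderiv_apply_le {E : Type*} [NormedAddCommGroup E] [NormedSpace ℝ E]
    {f : E → ℝ} {O : Set E} {K : ℝ} (hc : Continuous f) (hK : 0 ≤ K)
    (hzero : ∀ p ∉ O, f p = 0) (hdiff : ∀ p ∈ O, DifferentiableAt ℝ f p) {w : E}
    (hw : ∀ p ∈ O, |fderiv ℝ f p w| ≤ K) (p : E) : |f (p + w) - f p| ≤ K := by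
  set h : ℝ → ℝ := fun θ => f (p + θ • w)
  have hderiv : ∀ θ, p + θ • w ∈ O → HasDerivAt h (fderiv ℝ f (p + θ • w) w) θ := fun θ hθ =>
    (hdiff _ hθ).hasFDerivAt.comp_hasDerivAt θ
      (by simpa using ((hasDerivAt_id θ).smul_const w).const_add p)
  have hseg : ∀ u v, u ≤ v → Icc u v ⊆ {θ | p + θ • w ∈ O} →
      |h v - h u| ≤ K * (v - u) + 0 := fun u v huv hI => by
    rw [add_zero]
    exact norm_image_sub_le_of_norm_deriv_le_segment'
      (fun θ hθ => (hderiv θ (hI hθ)).hasDerivWithinAt)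
      (fun θ hθ => hw _ (hI (Ico_subset_Icc_self hθ))) v (right_mem_Icc.2 huv)
  simpa [h] using abs_sub_le_of_abs_le_off (by fun_prop) hK le_rfl le_rfl
    (fun θ hθ => by simp [h, hzero _ hθ]) hseg 0 1

lemma abs_sub_le_of_abs_fderiv_inl_le {E : Type*} [NormedAddCommGroup E] [NormedSpace ℝ E]
    {O : Set (E × ℝ)} {f : E × ℝ → ℝ} {L : ℝ} (hc : Continuous f) (hL : 0 ≤ L)
    (hzero : ∀ p ∉ O, f p = 0) (hdiff : ∀ p ∈ O, DifferentiableAt ℝ f p)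
    (hgrad : ∀ p ∈ O, ∀ v : E, |fderiv ℝ f p (v, (0 : ℝ))| ≤ L * ‖v‖) (Y Z : E) (τ : ℝ) :
    |f (Z, τ) - f (Y, τ)| ≤ L * ‖Z - Y‖ := by
  simpa using abs_sub_le_of_abs_fderiv_apply_le hc (by positivity) hzero hdiff
    (w := (Z - Y, (0 : ℝ))) (fun p hp => hgrad p hp _) (Y, τ)

lemma integral_sub_eq_intervalIntegral_integral {α : Type*} [TopologicalSpace α] [T2Space α]
    [MeasurableSpace α] [OpensMeasurableSpace α] {μ : Measure α} [IsFiniteMeasureOnCompacts μ]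
    [SFinite μ] {Q : Set α} (hQ : IsCompact Q) {F F' : α → ℝ → ℝ} {u v : ℝ} (huv : u ≤ v)
    (hF' : ContinuousOn (uncurry F') (Q ×ˢ Icc u v))
    (hF : ∀ y ∈ Q, ∀ τ ∈ Icc u v, HasDerivAt (F y) (F' y τ) τ) :
    ∫ y in Q, (F y v - F y u) ∂μ = ∫ τ in u..v, ∫ y in Q, F' y τ ∂μ := by
  have hFTC : ∀ y ∈ Q, F y v - F y u = ∫ τ in u..v, F' y τ := fun y hy => by
    have hcont : ContinuousOn (F' y) (Icc u v) :=
      hF'.comp (continuous_const.prodMk continuous_id).continuousOn fun τ hτ => ⟨hy, hτ⟩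
    rw [intervalIntegral.integral_eq_sub_of_hasDerivAt
      (fun τ hτ => hF y hy τ (uIcc_of_le huv ▸ hτ)) (hcont.intervalIntegrable_of_Icc huv)]
  rw [setIntegral_congr_fun hQ.measurableSet hFTC, intervalIntegral_integral_swap]
  rw [Measure.prod_restrict, uIoc_of_le huv]
  have hint : IntegrableOn (uncurry fun τ y => F' y τ) (Icc u v ×ˢ Q) (volume.prod μ) :=
    ContinuousOn.integrableOn_compact (isCompact_Icc.prod hQ)
      (hF'.comp continuous_swap.continuousOn fun p hp => ⟨hp.2, hp.1⟩)
  exact hint.mono_set (prod_mono Ioc_subset_Icc_self le_rfl)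

lemma abs_integral_divergence_le {m : ℕ} {a b : Fin (m + 1) → ℝ} {ℓ L : ℝ} (hℓ : 0 ≤ ℓ)
    (hab : ∀ i, b i - a i = ℓ) {F : Fin (m + 1) → (Fin (m + 1) → ℝ) → ℝ}
    {F' : Fin (m + 1) → (Fin (m + 1) → ℝ) → (Fin (m + 1) → ℝ) →L[ℝ] ℝ}
    (hFc : ∀ i, ContinuousOn (F i) (Icc a b))
    (hF' : ∀ y ∈ pi univ fun i => Ioo (a i) (b i), ∀ i, HasFDerivAt (F i) (F' i y) y)
    (hdiv : IntegrableOn (fun y => ∑ i, F' i y (Pi.single i 1)) (Icc a b))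
    (hF : ∀ i, ∀ y ∈ Icc a b, |F i y| ≤ L) :
    |∫ y in Icc a b, ∑ i, F' i y (Pi.single i 1)| ≤ 2 * (m + 1) * L * ℓ ^ m := by
  have hle : a ≤ b := fun i => by linarith [hab i]
  rw [integral_divergence_of_hasFDerivAt_off_countable' a b hle F F' ∅ countable_empty hFc
    (fun y hy => hF' y hy.1) hdiv]
  have hface : ∀ i, ∀ z ∈ Icc (a i) (b i),
      |∫ x in Icc (a ∘ i.succAbove) (b ∘ i.succAbove), F i (i.insertNth z x)| ≤ L * ℓ ^ m := by
    intro i z hz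
    have hvol : volume.real (Icc (a ∘ i.succAbove) (b ∘ i.succAbove)) = ℓ ^ m := by
      rw [measureReal_def, Real.volume_Icc_pi_toReal (a := a ∘ i.succAbove)
        (b := b ∘ i.succAbove) fun j => hle _]
      simp [hab]
    rw [← hvol]
    exact norm_setIntegral_le_of_norm_le_const (f := fun x => F i (i.insertNth z x))
      isCompact_Icc.measure_lt_top fun x hx => hF i _ (Fin.insertNth_mem_Icc.2 ⟨hz, hx⟩)
  calc _ ≤ ∑ _i : Fin (m + 1), (L * ℓ ^ m + L * ℓ ^ m) :=
        (Finset.abs_sum_le_sum_abs _ _).trans <| Finset.sum_le_sum fun i _ =>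
          (abs_sub _ _).trans <| add_le_add (hface i _ (right_mem_Icc.2 (hle i)))
            (hface i _ (left_mem_Icc.2 (hle i)))
    _ = 2 * (m + 1) * L * ℓ ^ m := by
        simp only [Finset.sum_const, Finset.card_univ, Fintype.card_fin, nsmul_eq_mul,
          Nat.cast_add, Nat.cast_one]
        ring

lemma abs_integral_laplacian_mul_le {n : ℕ} {O : Set (Pt n)} {f : Pt n → ℝ} {L ℓ τ : ℝ}
    (hO : IsOpen O) (hf : ContDiffOn ℝ 2 f O)
    (hgrad : ∀ p ∈ O, ∀ v : EuclideanSpace ℝ (Fin n), |fderiv ℝ f p (v, (0 : ℝ))| ≤ L * ‖v‖)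
    {a b : Fin n → ℝ} (hℓ : 0 ≤ ℓ) (hab : ∀ i, b i - a i = ℓ)
    (hQ : ∀ y ∈ Icc a b, (toLp 2 y, τ) ∈ O) :
    |∫ y in Icc a b, ∑ i, sdd f i (toLp 2 y, τ)| * ℓ ≤ 2 * n * L * ℓ ^ n := by
  cases n with
  | zero => simp
  | succ m =>
    set J : (Fin (m + 1) → ℝ) →L[ℝ] Pt (m + 1) :=
      ((EuclideanSpace.equiv (Fin (m + 1)) ℝ).symm : (Fin (m + 1) → ℝ) →L[ℝ] _).prod 0
    set G : Fin (m + 1) → Pt (m + 1) → ℝ :=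
      fun i q => fderiv ℝ f q (EuclideanSpace.single i 1, (0 : ℝ))
    have hG : ∀ i, ContDiffOn ℝ 1 (G i) O := fun i =>
      (hf.fderiv_of_isOpen hO (m := 1) (by norm_num)).clm_apply contDiffOn_const
    have hslice : Continuous fun y : Fin (m + 1) → ℝ => ((toLp 2 y, τ) : Pt (m + 1)) := by
      fun_prop
    have hGd : ∀ y ∈ Icc a b, ∀ i, HasFDerivAt (fun y => G i (toLp 2 y, τ))
        ((fderiv ℝ (G i) (toLp 2 y, τ)).comp J) y := by
      intro y hy i
      have hGi := ((hG i).differentiableOn one_ne_zero).differentiableAt (hO.mem_nhds (hQ y hy))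
      exact hGi.hasFDerivAt.comp y
        ((EuclideanSpace.equiv (Fin (m + 1)) ℝ).symm.hasFDerivAt.prodMk (hasFDerivAt_const τ y))
    have hdiv := abs_integral_divergence_le hℓ hab (F := fun i y => G i (toLp 2 y, τ))
      (F' := fun i y => (fderiv ℝ (G i) (toLp 2 y, τ)).comp J)
      (fun i => (hG i).continuousOn.comp hslice.continuousOn hQ)
      (fun y hy => hGd y (Ioo_subset_Icc_self (pi_univ_Ioo_subset _ _ hy)))
      (ContinuousOn.integrableOn_compact isCompact_Icc <| continuousOn_finsetSum _ fun i _ =>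
        (((hG i).continuousOn_fderiv_of_isOpen hO le_rfl).comp hslice.continuousOn hQ).clm_apply
          continuousOn_const)
      (fun i y hy => by simpa using hgrad _ (hQ y hy) (EuclideanSpace.single i 1))
    calc _ ≤ 2 * (m + 1) * L * ℓ ^ m * ℓ := by gcongr; exact hdiv
      _ = _ := by push_cast; ring

def cube {n : ℕ} (X : EuclideanSpace ℝ (Fin n)) (r : ℝ) : Set (Fin n → ℝ) :=
  Icc (fun i => X i - r) (fun i => X i + r)

lemma norm_toLp_sub_le_of_mem_cube {n : ℕ} {X : EuclideanSpace ℝ (Fin n)} {r : ℝ} (hr : 0 ≤ r)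
    {y : Fin n → ℝ} (hy : y ∈ cube X r) : ‖toLp 2 y - X‖ ≤ √n * r := by
  rw [EuclideanSpace.norm_eq, ← Real.sqrt_sq hr, ← Real.sqrt_mul n.cast_nonneg]
  refine Real.sqrt_le_sqrt ?_
  calc ∑ i, ‖(toLp 2 y - X) i‖ ^ 2 ≤ ∑ _i : Fin n, r ^ 2 := Finset.sum_le_sum fun i _ =>
        pow_le_pow_left₀ (norm_nonneg _) (abs_le.2
          ⟨by simp only [PiLp.sub_apply]; linarith [hy.1 i],
            by simp only [PiLp.sub_apply]; linarith [hy.2 i]⟩) 2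
    _ = n * r ^ 2 := by simp

lemma volume_real_cube {n : ℕ} (X : EuclideanSpace ℝ (Fin n)) {r : ℝ} (hr : 0 ≤ r) :
    volume.real (cube X r) = (2 * r) ^ n := by
  rw [cube, measureReal_def, Real.volume_Icc_pi_toReal fun i => by dsimp; linarith]
  simp [two_mul]

lemma abs_time_increment_le_of_cylinder_subset {n : ℕ} {O : Set (Pt n)} {f : Pt n → ℝ}
    {L ε : ℝ} (hO : IsOpen O) (hc : Continuous f) (hL : 0 ≤ L) (hf : ContDiffOn ℝ 2 f O)
    (hε : |ε| = 1) (heq : ∀ p ∈ O, td f p = ε * ∑ i, sdd f i p)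
    (hgrad : ∀ p ∈ O, ∀ v : EuclideanSpace ℝ (Fin n), |fderiv ℝ f p (v, (0 : ℝ))| ≤ L * ‖v‖)
    (hLip : ∀ (Y Z : EuclideanSpace ℝ (Fin n)) (τ : ℝ), |f (Z, τ) - f (Y, τ)| ≤ L * ‖Z - Y‖)
    {X : EuclideanSpace ℝ (Fin n)} {r u v : ℝ} (hr : 0 < r) (huv : u ≤ v)
    (hcyl : ∀ y ∈ cube X r, ∀ τ ∈ Icc u v, (toLp 2 y, τ) ∈ O) :
    |f (X, v) - f (X, u)| ≤ n * L / r * (v - u) + 2 * (√n * L * r) := by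
  set Q := cube X r
  have hQ : IsCompact Q := isCompact_Icc
  have hvol : volume.real Q = (2 * r) ^ n := volume_real_cube X hr.le
  have hvol_pos : 0 < (2 * r) ^ n := by positivity
  have hdiff : ∀ p ∈ O, DifferentiableAt ℝ f p := fun p hp =>
    (hf.differentiableOn two_ne_zero).differentiableAt (hO.mem_nhds hp)
  have htd : ContinuousOn (td f) O :=
    (hf.fderiv_of_isOpen hO (m := 1) (by norm_num)).continuousOn.clm_apply continuousOn_const
  have hslice : ∀ τ ∈ Icc u v, |∫ y in Q, td f (toLp 2 y, τ)| ≤ n * L * (2 * r) ^ n / r := by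
    intro τ hτ
    have hQτ : ∀ y ∈ Q, (toLp 2 y, τ) ∈ O := fun y hy => hcyl y hy τ hτ
    rw [setIntegral_congr_fun hQ.measurableSet fun y hy => heq _ (hQτ y hy),
      integral_const_mul, abs_mul, hε, one_mul, le_div_iff₀ hr]
    have : |∫ y in Q, ∑ i, sdd f i (toLp 2 y, τ)| * (2 * r) ≤ 2 * n * L * (2 * r) ^ n :=
      abs_integral_laplacian_mul_le hO hf hgrad (by positivity) (fun i => by ring) hQτ
    linarith
  have hflow : |∫ y in Q, (f (toLp 2 y, v) - f (toLp 2 y, u))| ≤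
      n * L * (2 * r) ^ n / r * (v - u) := by
    rw [integral_sub_eq_intervalIntegral_integral hQ huv (F := fun y τ => f (toLp 2 y, τ))
      (F' := fun y τ => td f (toLp 2 y, τ))
      (htd.comp (by fun_prop) fun p hp => hcyl p.1 hp.1 p.2 hp.2)
      fun y hy τ hτ => (hdiff _ (hcyl y hy τ hτ)).hasFDerivAt.comp_hasDerivAt τ
        ((hasDerivAt_const τ _).prodMk (hasDerivAt_id τ)),
      ← abs_of_nonneg (sub_nonneg.2 huv)]
    exact intervalIntegral.norm_integral_le_of_norm_le_const
      (f := fun τ => ∫ y in Q, td f (toLp 2 y, τ)) fun τ hτ =>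
        hslice τ (Ioc_subset_Icc_self (uIoc_of_le huv ▸ hτ))
  have hspatial :
      |∫ y in Q, ((f (X, v) - f (X, u)) - (f (toLp 2 y, v) - f (toLp 2 y, u)))| ≤
        2 * (√n * L * r) * (2 * r) ^ n := by
    rw [← hvol]
    refine norm_setIntegral_le_of_norm_le_const (f := fun y =>
      (f (X, v) - f (X, u)) - (f (toLp 2 y, v) - f (toLp 2 y, u))) hQ.measure_lt_top
      fun y hy => ?_
    have hy' : L * ‖toLp 2 y - X‖ ≤ √n * L * r := by
      calc _ ≤ L * (√n * r) := by gcongr; exact norm_toLp_sub_le_of_mem_cube hr.le hy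
        _ = _ := by ring
    have hv := hLip X (toLp 2 y) v
    have hu := hLip X (toLp 2 y) u
    rw [abs_le] at hv hu
    rw [Real.norm_eq_abs, abs_le]
    constructor <;> linarith
  have hint : IntegrableOn (fun y => f (toLp 2 y, v) - f (toLp 2 y, u)) Q :=
    (Continuous.continuousOn (by fun_prop)).integrableOn_compact hQ
  have hsplit : (f (X, v) - f (X, u)) * (2 * r) ^ n =
      (∫ y in Q, ((f (X, v) - f (X, u)) - (f (toLp 2 y, v) - f (toLp 2 y, u)))) +
        ∫ y in Q, (f (toLp 2 y, v) - f (toLp 2 y, u)) := by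
    rw [integral_sub (integrableOn_const (C := f (X, v) - f (X, u)) hQ.measure_lt_top.ne) hint,
      setIntegral_const, hvol, smul_eq_mul]
    ring
  refine le_of_mul_le_mul_right ?_ hvol_pos
  calc |f (X, v) - f (X, u)| * (2 * r) ^ n = |(f (X, v) - f (X, u)) * (2 * r) ^ n| := by
        rw [abs_mul, abs_of_pos hvol_pos]
    _ ≤ 2 * (√n * L * r) * (2 * r) ^ n + n * L * (2 * r) ^ n / r * (v - u) := by
        rw [hsplit]; exact (abs_add_le _ _).trans (add_le_add hspatial hflow)
    _ = _ := by ring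

lemma abs_time_increment_le {n : ℕ} {O : Set (Pt n)} {f : Pt n → ℝ} {L ε : ℝ}
    (hO : IsOpen O) (hc : Continuous f) (hL : 0 ≤ L) (hf : ContDiffOn ℝ 2 f O) (hε : |ε| = 1)
    (heq : ∀ p ∈ O, td f p = ε * ∑ i, sdd f i p) (hzero : ∀ p ∉ O, f p = 0)
    (hgrad : ∀ p ∈ O, ∀ v : EuclideanSpace ℝ (Fin n), |fderiv ℝ f p (v, (0 : ℝ))| ≤ L * ‖v‖)
    (X : EuclideanSpace ℝ (Fin n)) {r : ℝ} (hr : 0 < r) (t s : ℝ) :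
    |f (X, t) - f (X, s)| ≤ n * L / r * |t - s| + 6 * (√n * L * r) := by
  have hLip := abs_sub_le_of_abs_fderiv_inl_le hc hL hzero
    (fun p hp => (hf.differentiableOn two_ne_zero).differentiableAt (hO.mem_nhds hp)) hgrad
  have hoff : ∀ τ ∉ {τ | ∀ y ∈ cube X r, (toLp 2 y, τ) ∈ O}, |f (X, τ)| ≤ √n * L * r := by
    intro τ hτ
    obtain ⟨y, hy, hyO⟩ : ∃ y ∈ cube X r, (toLp 2 y, τ) ∉ O := by simpa using hτ
    calc |f (X, τ)| = |f (X, τ) - f (toLp 2 y, τ)| := by rw [hzero _ hyO, sub_zero]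
      _ ≤ L * ‖toLp 2 y - X‖ := norm_sub_rev (toLp 2 y) X ▸ hLip (toLp 2 y) X τ
      _ ≤ L * (√n * r) := by gcongr; exact norm_toLp_sub_le_of_mem_cube hr.le hy
      _ = √n * L * r := by ring
  have := abs_sub_le_of_abs_le_off (h := fun τ => f (X, τ)) (by fun_prop) (by positivity)
    (by positivity) (by positivity) hoff
    (fun u v huv hI => abs_time_increment_le_of_cylinder_subset hO hc hL hf hε heq hgrad hLip
      hr huv fun y hy τ hτ => hI hτ y hy) s t
  linarith

/-- a caloric (or adjoint caloric) function on an open set `O`, vanishing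
identically outside `O`, with spatial gradient bounded by `L` on `O`, is Hölder continuous
of exponent `1/2` in time, with constant `c‖∇f‖_{L^∞}`, `c` dimensional. -/
theorem statement0 (n : ℕ) :
    ∃ c : ℝ, 0 < c ∧
      ∀ (O : Set (Pt n)) (f : Pt n → ℝ) (L : ℝ),
        IsOpen O → Continuous f → 0 ≤ L →
        (IsCaloricOn f O ∨ IsAdjCaloricOn f O) →
        (∀ p, p ∉ O → f p = 0) →
        (∀ p ∈ O, ∀ v : EuclideanSpace ℝ (Fin n), |fderiv ℝ f p (v, (0 : ℝ))| ≤ L * ‖v‖) →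
        ∀ (X : EuclideanSpace ℝ (Fin n)) (t s : ℝ),
          |f (X, t) - f (X, s)| ≤ c * L * Real.sqrt |t - s| := by
  refine ⟨n + 6 * √n + 1, by positivity, ?_⟩
  intro O f L hO hc hL hcal hzero hgrad X t s
  obtain ⟨hf, ε, hε, heq⟩ : ContDiffOn ℝ 2 f O ∧
      ∃ ε : ℝ, |ε| = 1 ∧ ∀ p ∈ O, td f p = ε * ∑ i, sdd f i p := by
    rcases hcal with ⟨hf, hcal⟩ | ⟨hf, hcal⟩
    · exact ⟨hf, 1, by simp, fun p hp => by linarith [hcal p hp]⟩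
    · exact ⟨hf, -1, by simp, fun p hp => by linarith [hcal p hp]⟩
  rcases eq_or_ne t s with rfl | hts
  · simp
  set r := √|t - s|
  have hr : 0 < r := Real.sqrt_pos.2 (abs_pos.2 (sub_ne_zero.2 hts))
  have hr2 : r ^ 2 = |t - s| := Real.sq_sqrt (abs_nonneg _)
  calc |f (X, t) - f (X, s)| ≤ n * L / r * |t - s| + 6 * (√n * L * r) :=
        abs_time_increment_le hO hc hL hf hε heq hzero hgrad X hr t s
    _ = (n + 6 * √n) * L * r := by rw [← hr2]; field_simp
    _ ≤ (n + 6 * √n + 1) * L * r := by gcongr ?_ * _ * _; linarith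
end
end

section
/- Let ω̂^{(X,t)} denote adjoint-caloric measure of a δ-Reifenberg flat parabolic domain Ω (δ small), and suppose the boundary growth estimate 1 − ω̂^{(X,t)}(Δ_{2^{−j}}(Q,τ)) ≤ C 2^{3j/4} r^{3/4} holds for ‖(X,t)−(Q,τ)‖ ≤ r and all j with 2^{−j} ≥ 4r. If h is parabolically Hölder continuous with exponent α ∈ (0,1), α ≠ 3/4, on ∂Ω, then for ‖(X,t)−(Q,τ)‖ ≤ r < 1/4: ∫_{Δ_{2R}(Q,τ)} h dω̂^{(X,t)} ≤ h(Q,τ) + C r^{min{3/4, α}}, where C depends on R, the Hölder norm of h, n, and δ. -/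
/-
Write `∫_Δ h = h(Q) ω(Δ) + ∫_Δ (h - h(Q))`. The mass missing from `Δ₁ = Δ_1(Q)` and the part
of `Δ_{2R}` outside `Δ₁` cost `O(r^{3/4})` by the growth estimate at scale one. Inside `Δ₁`,
split along the dyadic surface balls `Δ_{2^{-j}}` down to the first scale `2^{-N} < 8r`: on the
`j`-th annulus `|h - h(Q)| ≲ 2^{-jα}`, while its mass is at most
`1 - ω(Δ_{2^{-j-1}}) ≲ 2^{3j/4} r^{3/4}`, and the innermost ball contributes `≲ r^α`. The
geometric series `∑_{j<N} 2^{j(3/4-α)} r^{3/4}` is `O(r^{3/4})` when `α > 3/4`, and is dominated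
by its last term, `O(r^α)` since `2^N ≤ 1/(4r)`, when `α < 3/4`.
-/

open MeasureTheory Real Set Filter Topology
open scoped ENNReal NNReal BigOperators

noncomputable section

/-- The parabolic cylinder of radius `R` centered at `c`. -/
def pcyl {n : ℕ} (c : Pt n) (R : ℝ) : Set (Pt n) :=
  {p | dist p.1 c.1 < R ∧ |p.2 - c.2| < R ^ 2}

section SetIntegral

variable {X : Type*} [MeasurableSpace X] {μ : Measure X} {f : X → ℝ} {s t : Set X}

lemma setIntegral_le_mul_measureReal [IsFiniteMeasure μ] {b : ℝ} (hb : ∀ x ∈ s, |f x| ≤ b) :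
    ∫ x in s, f x ∂μ ≤ b * μ.real s :=
  (Real.le_norm_self _).trans (norm_setIntegral_le_of_norm_le_const (measure_lt_top μ s) hb)

variable [IsProbabilityMeasure μ]

lemma measureReal_sdiff_le_one_sub (ht : MeasurableSet t) : μ.real (s \ t) ≤ 1 - μ.real t := by
  rw [← probReal_compl_eq_one_sub ht]
  exact measureReal_mono (sdiff_subset_compl s t)

lemma setIntegral_le_add_setIntegral_sub_of_subset {c M : ℝ} (ht : MeasurableSet t) (hts : t ⊆ s)
    (hf : IntegrableOn f s μ) (hfM : ∀ x ∈ s, |f x| ≤ M) (hc : |c| ≤ M) :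
    ∫ x in s, f x ∂μ ≤ c + 3 * M * (1 - μ.real t) + ∫ x in t, (f x - c) ∂μ := by
  have hfc : IntegrableOn (fun x => f x - c) s μ := hf.sub (integrableOn_const (by finiteness))
  have hsplit : ∫ x in s, f x ∂μ =
      c * μ.real s + ∫ x in s \ t, (f x - c) ∂μ + ∫ x in t, (f x - c) ∂μ := by
    rw [setIntegral_sdiff ht hfc hts, integral_sub hf (integrableOn_const (by finiteness)),
      setIntegral_const, smul_eq_mul]
    ring
  have hM : 0 ≤ M := (abs_nonneg c).trans hc
  have hfar : ∫ x in s \ t, (f x - c) ∂μ ≤ 2 * M * (1 - μ.real t) := by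
    refine (setIntegral_le_mul_measureReal fun x hx => ?_).trans
      (mul_le_mul_of_nonneg_left (measureReal_sdiff_le_one_sub ht) (by positivity))
    linarith [abs_sub (f x) c, hfM x hx.1]
  have hts' : μ.real t ≤ μ.real s := measureReal_mono hts
  have hs1 : μ.real s ≤ 1 := measureReal_le_one
  nlinarith [abs_le.mp hc]

lemma setIntegral_le_sum_of_antitone {B : ℕ → Set X} (hB : Antitone B)
    (hBm : ∀ j, MeasurableSet (B j)) (hf : IntegrableOn f (B 0) μ) {b : ℕ → ℝ} (hb : ∀ j, 0 ≤ b j)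
    (hfb : ∀ j, ∀ x ∈ B j, |f x| ≤ b j) (N : ℕ) :
    ∫ x in B 0, f x ∂μ ≤ ∑ j ∈ Finset.range N, b j * (1 - μ.real (B (j + 1))) + b N := by
  have hannulus (j : ℕ) : ∫ x in B j \ B (j + 1), f x ∂μ =
      ∫ x in B j, f x ∂μ - ∫ x in B (j + 1), f x ∂μ :=
    setIntegral_sdiff (hBm _) (hf.mono_set (hB j.zero_le)) (hB j.le_succ)
  have htelescope : ∫ x in B 0, f x ∂μ =
      ∑ j ∈ Finset.range N, ∫ x in B j \ B (j + 1), f x ∂μ + ∫ x in B N, f x ∂μ := by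
    simp only [hannulus, Finset.sum_range_sub']
    ring
  rw [htelescope]
  gcongr with j
  · exact (setIntegral_le_mul_measureReal fun x hx => hfb j x hx.1).trans
      (mul_le_mul_of_nonneg_left (measureReal_sdiff_le_one_sub (hBm _)) (hb j))
  · exact (setIntegral_le_mul_measureReal (hfb N)).trans
      (mul_le_of_le_one_right (hb N) measureReal_le_one)

end SetIntegral

section Parabolic

variable {n : ℕ}

lemma measurableSet_pcyl (c : Pt n) (ρ : ℝ) : MeasurableSet (pcyl c ρ) :=
  ((isOpen_lt (continuous_fst.dist continuous_const) continuous_const).inter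
    (isOpen_lt (continuous_snd.sub continuous_const).abs continuous_const)).measurableSet

lemma pcyl_subset_pcyl (c : Pt n) {ρ₁ ρ₂ : ℝ} (h₀ : 0 ≤ ρ₁) (h : ρ₁ ≤ ρ₂) :
    pcyl c ρ₁ ⊆ pcyl c ρ₂ := fun _ hp =>
  ⟨hp.1.trans_le h, hp.2.trans_le (pow_le_pow_left₀ h₀ h 2)⟩

lemma pdist_le_of_mem_pcyl {c p : Pt n} {ρ : ℝ} (hp : p ∈ pcyl c ρ) :
    pdist p c ≤ 2 * ρ := by
  have hsqrt : √|p.2 - c.2| < ρ := (Real.sqrt_lt' (by linarith [dist_nonneg.trans_lt hp.1])).2 hp.2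
  unfold pdist
  linarith [hp.1]

lemma abs_sub_le_of_mem_pcyl {S : Set (Pt n)} {h : Pt n → ℝ} {Q p : Pt n} {H α ρ : ℝ}
    (hα : 0 ≤ α) (hH : 0 ≤ H)
    (hHolder : ∀ p ∈ S, |h p - h Q| ≤ H * pdist p Q ^ α) (hp : p ∈ pcyl Q ρ ∩ S) :
    |h p - h Q| ≤ H * (2 * ρ) ^ α :=
  (hHolder p hp.2).trans <| mul_le_mul_of_nonneg_left
    (rpow_le_rpow (add_nonneg dist_nonneg (sqrt_nonneg _)) (pdist_le_of_mem_pcyl hp.1) hα) hH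

end Parabolic

lemma antitone_two_rpow_neg_natCast : Antitone fun j : ℕ => (2 : ℝ) ^ (-(j : ℝ)) :=
  fun _ _ hij => rpow_le_rpow_of_exponent_le one_le_two (neg_le_neg (Nat.cast_le.mpr hij))

lemma exists_two_rpow_neg_natCast_mem {r : ℝ} (hr : 0 < r) (hr1 : r ≤ 1) :
    ∃ N : ℕ, r ≤ (2 : ℝ) ^ (-(N : ℝ)) ∧ (2 : ℝ) ^ (-(N : ℝ)) < 2 * r := by
  obtain ⟨N, hle, hlt⟩ := exists_nat_pow_near (one_le_inv₀ hr |>.mpr hr1) one_lt_two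
  refine ⟨N, ?_, ?_⟩ <;> rw [rpow_neg zero_le_two, rpow_natCast]
  · exact (le_inv_comm₀ hr (by positivity)).mpr hle
  · rw [pow_succ] at hlt
    rw [inv_lt_iff_one_lt_mul₀ (by positivity)]
    nlinarith [mul_inv_cancel₀ hr.ne']

lemma two_mul_two_rpow_neg_rpow_mul (x α γ : ℝ) :
    (2 * (2 : ℝ) ^ (-x)) ^ α * (2 : ℝ) ^ (γ * (x + 1)) = 2 ^ (α + γ) * 2 ^ (x * (γ - α)) := by
  have h2x : 2 * (2 : ℝ) ^ (-x) = 2 ^ (1 - x) := by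
    rw [sub_eq_add_neg, rpow_add two_pos, rpow_one]
  rw [h2x, ← rpow_mul zero_le_two, ← rpow_add two_pos, ← rpow_add two_pos]
  ring_nf

lemma exists_sum_two_rpow_mul_mul_rpow_le {α γ : ℝ} (hne : α ≠ γ) :
    ∃ K, 0 < K ∧ ∀ r, 0 < r → ∀ N : ℕ, r ≤ (2 : ℝ) ^ (-(N : ℝ)) →
      (∑ j ∈ Finset.range N, (2 : ℝ) ^ ((j : ℝ) * (γ - α))) * r ^ γ ≤ K * r ^ min γ α := by
  set q : ℝ := 2 ^ (γ - α) with hq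
  have hsum (N : ℕ) : ∑ j ∈ Finset.range N, (2 : ℝ) ^ ((j : ℝ) * (γ - α)) =
      ∑ j ∈ Finset.range N, q ^ j :=
    Finset.sum_congr rfl fun j _ => by rw [mul_comm, rpow_mul_natCast zero_le_two]
  rcases hne.lt_or_gt with hlt | hgt
  · have hq1 : 1 < q := one_lt_rpow one_lt_two (sub_pos.2 hlt)
    refine ⟨(q - 1)⁻¹, by simpa using hq1, fun r hr N hN => ?_⟩
    have hr_le : r ^ (γ - α) ≤ (q ^ N)⁻¹ := calc
      r ^ (γ - α) ≤ ((2 : ℝ) ^ (-(N : ℝ))) ^ (γ - α) := rpow_le_rpow hr.le hN (sub_pos.2 hlt).le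
      _ = (q ^ N)⁻¹ := by
        rw [hq, ← rpow_mul_natCast zero_le_two, ← rpow_mul zero_le_two, ← rpow_neg zero_le_two]
        ring_nf
    have hqN : q ^ N * r ^ γ ≤ r ^ α := calc
      q ^ N * r ^ γ = q ^ N * r ^ (γ - α) * r ^ α := by
        rw [mul_assoc, ← rpow_add hr, sub_add_cancel]
      _ ≤ q ^ N * (q ^ N)⁻¹ * r ^ α := by gcongr
      _ = r ^ α := by field_simp
    rw [hsum, geom_sum_eq hq1.ne', min_eq_right hlt.le]
    calc (q ^ N - 1) / (q - 1) * r ^ γ = (q ^ N * r ^ γ - r ^ γ) / (q - 1) := by ring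
      _ ≤ r ^ α / (q - 1) := by gcongr; linarith [rpow_nonneg hr.le γ]
      _ = (q - 1)⁻¹ * r ^ α := by ring
  · have hq1 : q < 1 := rpow_lt_one_of_one_lt_of_neg one_lt_two (sub_neg.2 hgt)
    refine ⟨(1 - q)⁻¹, by simpa using hq1, fun r hr N _ => ?_⟩
    rw [hsum, min_eq_left hgt.le]
    gcongr
    have := geom_sum_Ico_le_of_lt_one (m := 0) (n := N) (by positivity : 0 ≤ q) hq1
    rwa [← Finset.range_eq_Ico, pow_zero, one_div] at this

lemma dyadic_sum_le {α C₀ H K r : ℝ} {N : ℕ} {m : ℕ → ℝ} (hα : 0 ≤ α) (hC₀ : 0 ≤ C₀)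
    (hH : 0 ≤ H) (hr : 0 < r) (hr1 : r ≤ 1) (hN : (2 : ℝ) ^ (-(N : ℝ)) < 8 * r)
    (hK : (∑ j ∈ Finset.range N, (2 : ℝ) ^ ((j : ℝ) * (3 / 4 - α))) * r ^ ((3 : ℝ) / 4) ≤
      K * r ^ min ((3 : ℝ) / 4) α)
    (hm : ∀ j ≤ N, 1 - m j ≤ C₀ * 2 ^ (3 * (j : ℝ) / 4) * r ^ ((3 : ℝ) / 4)) :
    3 * H * (1 - m 0) +
        ∑ j ∈ Finset.range N, H * (2 * (2 : ℝ) ^ (-(j : ℝ))) ^ α * (1 - m (j + 1)) +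
        H * (2 * (2 : ℝ) ^ (-(N : ℝ))) ^ α ≤
      (3 * H * C₀ + H * C₀ * 2 ^ (α + 3 / 4) * K + 16 ^ α * H) * r ^ min ((3 : ℝ) / 4) α := by
  set e := min ((3 : ℝ) / 4) α
  have hr34 : r ^ ((3 : ℝ) / 4) ≤ r ^ e := rpow_le_rpow_of_exponent_ge hr hr1 (min_le_left _ _)
  have hrα : r ^ α ≤ r ^ e := rpow_le_rpow_of_exponent_ge hr hr1 (min_le_right _ _)
  have hfar : 3 * H * (1 - m 0) ≤ 3 * H * C₀ * r ^ e := by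
    have h0 := hm 0 N.zero_le
    simp only [Nat.cast_zero, mul_zero, zero_div, rpow_zero, mul_one] at h0
    calc 3 * H * (1 - m 0) ≤ 3 * H * (C₀ * r ^ ((3 : ℝ) / 4)) := by gcongr
      _ ≤ 3 * H * C₀ * r ^ e := by rw [← mul_assoc]; gcongr
  have hannuli : ∑ j ∈ Finset.range N, H * (2 * (2 : ℝ) ^ (-(j : ℝ))) ^ α * (1 - m (j + 1)) ≤
      H * C₀ * 2 ^ (α + 3 / 4) * K * r ^ e := calc
    _ ≤ ∑ j ∈ Finset.range N,
          H * C₀ * 2 ^ (α + 3 / 4) * (2 ^ ((j : ℝ) * (3 / 4 - α)) * r ^ ((3 : ℝ) / 4)) := by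
      refine Finset.sum_le_sum fun j hj => ?_
      have hmj := hm (j + 1) (Finset.mem_range.mp hj)
      rw [show 3 * ((j + 1 : ℕ) : ℝ) / 4 = 3 / 4 * ((j : ℝ) + 1) by push_cast; ring] at hmj
      calc H * (2 * (2 : ℝ) ^ (-(j : ℝ))) ^ α * (1 - m (j + 1))
          ≤ H * (2 * (2 : ℝ) ^ (-(j : ℝ))) ^ α *
            (C₀ * 2 ^ (3 / 4 * ((j : ℝ) + 1)) * r ^ ((3 : ℝ) / 4)) := by gcongr
        _ = H * C₀ * ((2 * (2 : ℝ) ^ (-(j : ℝ))) ^ α * 2 ^ (3 / 4 * ((j : ℝ) + 1))) *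
            r ^ ((3 : ℝ) / 4) := by ring
        _ = _ := by rw [two_mul_two_rpow_neg_rpow_mul]; ring
    _ = H * C₀ * 2 ^ (α + 3 / 4) *
          ((∑ j ∈ Finset.range N, (2 : ℝ) ^ ((j : ℝ) * (3 / 4 - α))) * r ^ ((3 : ℝ) / 4)) := by
      rw [Finset.sum_mul, Finset.mul_sum]
    _ ≤ H * C₀ * 2 ^ (α + 3 / 4) * K * r ^ e := by rw [mul_assoc _ K]; gcongr
  have hball : H * (2 * (2 : ℝ) ^ (-(N : ℝ))) ^ α ≤ 16 ^ α * H * r ^ e := calc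
    _ ≤ H * (16 * r) ^ α := by gcongr H * ?_ ^ α; linarith
    _ = 16 ^ α * H * r ^ α := by rw [mul_rpow (by norm_num) hr.le]; ring
    _ ≤ 16 ^ α * H * r ^ e := by gcongr
  linarith

theorem statement14_general (n : ℕ) (α R C₀ H : ℝ)
    (hα : 0 < α) (hαne : α ≠ 3 / 4)
    (hR : 1 ≤ R) (hC₀ : 0 < C₀) (hH : 0 ≤ H) :
    ∃ C : ℝ, 0 < C ∧
      ∀ (Ω : Set (Pt n)) (ω : Pt n → Measure (Pt n)) (h : Pt n → ℝ),
        (∀ p ∈ Ω, IsProbabilityMeasure (ω p)) →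
        Measurable h →
        (∀ p ∈ frontier Ω, |h p| ≤ H) →
        (∀ p ∈ frontier Ω, ∀ q ∈ frontier Ω, |h p - h q| ≤ H * pdist p q ^ α) →
        (∀ (X Q : Pt n) (r : ℝ) (j : ℕ), X ∈ Ω → Q ∈ frontier Ω → 0 < r →
          pdist X Q ≤ r → 4 * r ≤ (2 : ℝ) ^ (-(j : ℝ)) →
          1 - (ω X (pcyl Q ((2 : ℝ) ^ (-(j : ℝ))) ∩ frontier Ω)).toReal ≤
            C₀ * 2 ^ (3 * (j : ℝ) / 4) * r ^ ((3 : ℝ) / 4)) →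
        ∀ (X Q : Pt n) (r : ℝ), X ∈ Ω → Q ∈ frontier Ω → 0 < r → r < 1 / 4 →
          pdist X Q ≤ r →
          ∫ p in pcyl Q (2 * R) ∩ frontier Ω, h p ∂(ω X) ≤
            h Q + C * r ^ min ((3 : ℝ) / 4) α := by
  obtain ⟨K, hK, hgeom⟩ := exists_sum_two_rpow_mul_mul_rpow_le hαne
  refine ⟨3 * H * C₀ + H * C₀ * 2 ^ (α + 3 / 4) * K + 16 ^ α * H + 1, by positivity, ?_⟩
  intro Ω ω h hprob hmeas hbd hHolder hgrow X Q r hX hQ hr hr4 hXQ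
  have := hprob X hX
  obtain ⟨N, hN4, hN8⟩ := exists_two_rpow_neg_natCast_mem (by positivity : 0 < 4 * r) (by linarith)
  set B : ℕ → Set (Pt n) := fun j => pcyl Q (2 ^ (-(j : ℝ))) ∩ frontier Ω
  have hS : MeasurableSet (frontier Ω) := isClosed_frontier.measurableSet
  have hBm (j : ℕ) : MeasurableSet (B j) := (measurableSet_pcyl _ _).inter hS
  have hB : Antitone B := fun _ _ hij => inter_subset_inter_left _ <|
    pcyl_subset_pcyl Q (by positivity) (antitone_two_rpow_neg_natCast hij)
  have hB0 : B 0 ⊆ pcyl Q (2 * R) ∩ frontier Ω :=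
    inter_subset_inter_left _ (pcyl_subset_pcyl Q (by positivity) (by simp; linarith))
  have hint : IntegrableOn h (frontier Ω) (ω X) :=
    Measure.integrableOn_of_bounded (by finiteness) hmeas.aestronglyMeasurable
      (ae_restrict_of_forall_mem hS hbd)
  have houter := setIntegral_le_add_setIntegral_sub_of_subset (hBm 0) hB0
    (hint.mono_set inter_subset_right) (fun p hp => hbd p hp.2) (hbd Q hQ)
  have hinner := setIntegral_le_sum_of_antitone (f := fun p => h p - h Q) hB hBm
    ((hint.sub (integrableOn_const (by finiteness))).mono_set inter_subset_right)
    (fun j => by positivity)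
    (fun j p hp => abs_sub_le_of_mem_pcyl hα.le hH (fun p hp => hHolder p hp Q hQ) hp) N
  have hsum := dyadic_sum_le (m := fun j => (ω X).real (B j)) hα.le hC₀.le hH hr (by linarith)
    (by linarith) (hgeom r hr N (by linarith))
    (fun j hj => hgrow X Q r j hX hQ hr hXQ (hN4.trans (antitone_two_rpow_neg_natCast hj)))
  linarith [rpow_nonneg hr.le (min ((3 : ℝ) / 4) α)]

/-- if the adjoint caloric measures `ω̂^{(X,t)}` of `Ω` satisfy the boundary
growth estimate `1 - ω̂^{(X,t)}(Δ_{2^{-j}}(Q,τ)) ≤ C₀ 2^{3j/4} r^{3/4}` for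
`‖(X,t)-(Q,τ)‖ ≤ r` and `2^{-j} ≥ 4r`, and `h` is parabolically Hölder continuous of
exponent `α ∈ (0,1)`, `α ≠ 3/4`, with Hölder norm `H` on `∂Ω`, then for
`‖(X,t)-(Q,τ)‖ ≤ r < 1/4`,
`∫_{Δ_{2R}(Q,τ)} h dω̂^{(X,t)} ≤ h(Q,τ) + C r^{min(3/4,α)}`. -/
theorem statement14 (n : ℕ) (α R C₀ H : ℝ)
    (hα : 0 < α) (hα1 : α < 1) (hαne : α ≠ 3 / 4)
    (hR : 1 ≤ R) (hC₀ : 0 < C₀) (hH : 0 ≤ H) :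
    ∃ C : ℝ, 0 < C ∧
      ∀ (Ω : Set (Pt n)) (ω : Pt n → Measure (Pt n)) (h : Pt n → ℝ),
        (∀ p ∈ Ω, IsProbabilityMeasure (ω p)) →
        Measurable h →
        (∀ p ∈ frontier Ω, |h p| ≤ H) →
        (∀ p ∈ frontier Ω, ∀ q ∈ frontier Ω, |h p - h q| ≤ H * pdist p q ^ α) →
        (∀ (X Q : Pt n) (r : ℝ) (j : ℕ), X ∈ Ω → Q ∈ frontier Ω → 0 < r →
          pdist X Q ≤ r → 4 * r ≤ (2 : ℝ) ^ (-(j : ℝ)) →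
          1 - (ω X (pcyl Q ((2 : ℝ) ^ (-(j : ℝ))) ∩ frontier Ω)).toReal ≤
            C₀ * 2 ^ (3 * (j : ℝ) / 4) * r ^ ((3 : ℝ) / 4)) →
        ∀ (X Q : Pt n) (r : ℝ), X ∈ Ω → Q ∈ frontier Ω → 0 < r → r < 1 / 4 →
          pdist X Q ≤ r →
          ∫ p in pcyl Q (2 * R) ∩ frontier Ω, h p ∂(ω X) ≤
            h Q + C * r ^ min ((3 : ℝ) / 4) α :=
  statement14_general n α R C₀ H hα hαne hR hC₀ hH
end
end
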